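/- arXiv:2104.05888 — 3 statements merged into one kernel-verified Lean document; each statement's English description precedes it below -/
import Mathlib

section
/- Let x ~ N(μ, σ²) with σ > 0. Then Var(ReLU(x)) < Var(x) = σ², where ReLU(x) = max(x, 0). -/
open MeasureTheory ProbabilityTheory Real

/-!
`ReLU` is `1`-Lipschitz, so `(ReLU x - ReLU μ)² ≤ (x - μ)²`, with strict inequality for
`x < min μ 0`. The variance of `ReLU(x)` is at most its mean squared deviation from any
constant, in particular from `ReLU μ`, hence at most `E (x - μ)² = σ²`, and strictly less
because the Gaussian charges the half-line `(-∞, min μ 0)`.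
-/

namespace ProbabilityTheory

variable {Ω : Type*} [MeasurableSpace Ω] {P : Measure Ω} [IsProbabilityMeasure P]

lemma variance_le_integral_sub_sq {Y : Ω → ℝ} (hY : AEStronglyMeasurable Y P) (c : ℝ) :
    Var[Y; P] ≤ ∫ ω, (Y ω - c) ^ 2 ∂P := by
  rw [← variance_sub_const hY c]
  exact variance_le_expectation_sq (by fun_prop)

lemma variance_lt_variance_of_sq_sub_le {X Y : Ω → ℝ} (hX : MemLp X 2 P)
    (hY : AEStronglyMeasurable Y P) (c : ℝ)
    (hle : ∀ ω, (Y ω - c) ^ 2 ≤ (X ω - P[X]) ^ 2)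
    (hlt : P {ω | (Y ω - c) ^ 2 < (X ω - P[X]) ^ 2} ≠ 0) :
    Var[Y; P] < Var[X; P] := by
  have hX_int : Integrable (fun ω ↦ (X ω - P[X]) ^ 2) P :=
    (hX.sub (memLp_const _)).integrable_sq
  have hY_int : Integrable (fun ω ↦ (Y ω - c) ^ 2) P :=
    hX_int.mono (by fun_prop) <| .of_forall fun ω ↦ by
      simpa only [norm_pow, norm_eq_abs, sq_abs] using hle ω
  have hsupport : Function.support (fun ω ↦ (X ω - P[X]) ^ 2 - (Y ω - c) ^ 2)
      = {ω | (Y ω - c) ^ 2 < (X ω - P[X]) ^ 2} := by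
    ext ω
    simp only [Function.mem_support, Set.mem_ofPred_eq, sub_ne_zero]
    exact ⟨fun h ↦ (hle ω).lt_of_ne h.symm, fun h ↦ h.ne'⟩
  have hgap : 0 < ∫ ω, ((X ω - P[X]) ^ 2 - (Y ω - c) ^ 2) ∂P := by
    rw [integral_pos_iff_support_of_nonneg (fun ω ↦ sub_nonneg.mpr (hle ω))
      (hX_int.sub hY_int), hsupport]
    exact pos_iff_ne_zero.mpr hlt
  rw [integral_sub hX_int hY_int] at hgap
  calc Var[Y; P] ≤ ∫ ω, (Y ω - c) ^ 2 ∂P := variance_le_integral_sub_sq hY c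
    _ < ∫ ω, (X ω - P[X]) ^ 2 ∂P := by linarith
    _ = Var[X; P] := (variance_eq_integral hX.aemeasurable).symm

end ProbabilityTheory

lemma sq_max_zero_sub_max_zero_le (x m : ℝ) : (max x 0 - max m 0) ^ 2 ≤ (x - m) ^ 2 :=
  sq_le_sq.mpr (abs_max_sub_max_le_abs x m 0)

lemma sq_max_zero_sub_max_zero_lt {x m : ℝ} (hx : x < min m 0) :
    (max x 0 - max m 0) ^ 2 < (x - m) ^ 2 := by
  have hx0 : x < 0 := hx.trans_le (min_le_right m 0)
  have hxm : x < m := hx.trans_le (min_le_left m 0)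
  rw [max_eq_right hx0.le]
  cases le_total m 0 with
  | inl hm => rw [max_eq_right hm]; nlinarith
  | inr hm => rw [max_eq_left hm]; nlinarith

theorem variance_relu_lt_variance_gaussian (μ σ : ℝ) (hσ : 0 < σ) :
    variance (fun x => max x 0) (gaussianReal μ (Real.toNNReal (σ ^ 2))) < σ ^ 2 := by
  have hv : Real.toNNReal (σ ^ 2) ≠ 0 := by positivity
  have hvar : Var[id; gaussianReal μ (Real.toNNReal (σ ^ 2))] = σ ^ 2 := by
    rw [variance_id_gaussianReal, Real.coe_toNNReal _ (sq_nonneg σ)]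
  have hcharge : gaussianReal μ (Real.toNNReal (σ ^ 2)) (Set.Iio (min μ 0)) ≠ 0 :=
    fun h ↦ by simpa using gaussianReal_absolutelyContinuous' μ hv h
  refine (variance_lt_variance_of_sq_sub_le (Y := fun x ↦ max x 0) (memLp_id_gaussianReal 2)
    (by fun_prop) (max μ 0) (fun x ↦ ?_) (fun h ↦ ?_)).trans_eq hvar
  · simpa only [id_eq, integral_id_gaussianReal] using sq_max_zero_sub_max_zero_le x μ
  · refine hcharge (measure_mono_null (fun x hx ↦ ?_) h)
    simpa only [Set.mem_ofPred_eq, id_eq, integral_id_gaussianReal] using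
      sq_max_zero_sub_max_zero_lt hx
end

section
/- Let Σ₁, Σ₂ be N×N positive definite matrices and let E₁₂ be an N×N matrix such that the block matrix Σ = [[Σ₁, E₁₂],[E₁₂ᵀ, Σ₂]] is positive semidefinite and the correlation coefficient bound |r| ≤ r_max < 1 holds, meaning that for all vectors a, b: (aᵀE₁₂b)² ≤ r_max² (aᵀΣ₁a)(bᵀΣ₂b). Then with τ = 1 + r_max, the block-diagonal matrix B = [[τΣ₁, 0],[0, τΣ₂]] satisfies B ⪰ Σ, i.e., B - Σ is positive semidefinite. -/
/-!
Write `x = (a, b)` and put `p = aᵀΣ₁a`, `q = bᵀΣ₂b`, `e = aᵀE₁₂b`. The quadratic form of `B - Σ`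
at `x` is `r_max p - 2e + r_max q`, and the correlation bound `e² ≤ (r_max p)(r_max q)` makes it
nonnegative by AM-GM.
-/

open Matrix

theorem add_two_mul_add_nonneg_of_sq_le_mul {p q e : ℝ} (hp : 0 ≤ p) (hq : 0 ≤ q)
    (he : e ^ 2 ≤ p * q) : 0 ≤ p + 2 * e + q := by
  nlinarith [sq_nonneg (p - q)]

namespace Matrix

variable {m n : Type*} [Fintype m] [Fintype n]

theorem dotProduct_fromBlocks_transpose_mulVec {R : Type*} [CommSemiring R] (A : Matrix m m R)
    (F : Matrix m n R) (D : Matrix n n R) (x : m ⊕ n → R) :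
    x ⬝ᵥ fromBlocks A F Fᵀ D *ᵥ x =
      x ∘ Sum.inl ⬝ᵥ A *ᵥ (x ∘ Sum.inl) + 2 * (x ∘ Sum.inl ⬝ᵥ F *ᵥ (x ∘ Sum.inr)) +
        x ∘ Sum.inr ⬝ᵥ D *ᵥ (x ∘ Sum.inr) := by
  rw [fromBlocks_mulVec, dotProduct_block]
  simp only [Sum.elim_comp_inl, Sum.elim_comp_inr, dotProduct_add,
    dotProduct_transpose_mulVec]
  ring

theorem PosSemidef.fromBlocks_of_sq_le {A : Matrix m m ℝ} {D : Matrix n n ℝ} (F : Matrix m n ℝ)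
    (hA : A.PosSemidef) (hD : D.PosSemidef)
    (hF : ∀ a b, (a ⬝ᵥ F *ᵥ b) ^ 2 ≤ (a ⬝ᵥ A *ᵥ a) * (b ⬝ᵥ D *ᵥ b)) :
    (fromBlocks A F Fᵀ D).PosSemidef := by
  refine posSemidef_iff_dotProduct_mulVec.2 ⟨?_, fun x => ?_⟩
  · exact isHermitian_fromBlocks_iff.2 ⟨hA.1, rfl, transpose_transpose F, hD.1⟩
  · rw [star_trivial, dotProduct_fromBlocks_transpose_mulVec]
    exact add_two_mul_add_nonneg_of_sq_le_mul (hA.dotProduct_mulVec_nonneg _)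
      (hD.dotProduct_mulVec_nonneg _) (hF _ _)

end Matrix

theorem hanebeck_bound_block_diag_general {N : ℕ}
    (S1 S2 E : Matrix (Fin N) (Fin N) ℝ) (rmax : ℝ)
    (h1 : S1.PosDef) (h2 : S2.PosDef)
    (hr0 : 0 ≤ rmax)
    (hcorr : ∀ a b : Fin N → ℝ,
      (a ⬝ᵥ E.mulVec b) ^ 2 ≤ rmax ^ 2 * (a ⬝ᵥ S1.mulVec a) * (b ⬝ᵥ S2.mulVec b)) :
    (Matrix.fromBlocks ((1 + rmax) • S1) 0 0 ((1 + rmax) • S2)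
      - Matrix.fromBlocks S1 E Eᵀ S2).PosSemidef := by
  have hdiff : Matrix.fromBlocks ((1 + rmax) • S1) 0 0 ((1 + rmax) • S2)
      - Matrix.fromBlocks S1 E Eᵀ S2 = fromBlocks (rmax • S1) (-E) (-E)ᵀ (rmax • S2) := by
    rw [sub_eq_add_neg, fromBlocks_neg, fromBlocks_add, transpose_neg, zero_add, zero_add]
    congr 1 <;> module
  rw [hdiff]
  refine (h1.posSemidef.smul hr0).fromBlocks_of_sq_le (-E) (h2.posSemidef.smul hr0)
    fun a b => ?_
  simp only [neg_mulVec, dotProduct_neg, neg_sq, smul_mulVec, dotProduct_smul, smul_eq_mul]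
  linarith [hcorr a b]

theorem hanebeck_bound_block_diag {N : ℕ}
    (S1 S2 E : Matrix (Fin N) (Fin N) ℝ) (rmax : ℝ)
    (h1 : S1.PosDef) (h2 : S2.PosDef)
    (hjoint : (Matrix.fromBlocks S1 E Eᵀ S2).PosSemidef)
    (hr0 : 0 ≤ rmax) (hr1 : rmax < 1)
    (hcorr : ∀ a b : Fin N → ℝ,
      (a ⬝ᵥ E.mulVec b) ^ 2 ≤ rmax ^ 2 * (a ⬝ᵥ S1.mulVec a) * (b ⬝ᵥ S2.mulVec b)) :
    (Matrix.fromBlocks ((1 + rmax) • S1) 0 0 ((1 + rmax) • S2)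
      - Matrix.fromBlocks S1 E Eᵀ S2).PosSemidef :=
  hanebeck_bound_block_diag_general S1 S2 E rmax h1 h2 hr0 hcorr
end

section
/- Let f: R^d → Y be a (measurable) classifier, σ > 0, ε ~ N(0, σ²I), and define the smoothed classifier g(x) = argmax_{c∈Y} P(f(x+ε) = c). Suppose for some x, classes c_A, and bounds p_A, p_B ∈ [0,1] with p_A ≥ p_B, we have P(f(x+ε) = c_A) ≥ p_A and max_{c ≠ c_A} P(f(x+ε) = c) ≤ p_B. Then for every δ with ‖δ‖₂ < (σ/2)(Φ⁻¹(p_A) − Φ⁻¹(p_B)), we have g(x+δ) = c_A. -/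
open MeasureTheory ProbabilityTheory Real

/-- CDF of the standard normal distribution. -/
noncomputable def stdNormalCDF (z : ℝ) : ℝ :=
  ((gaussianReal 0 1) (Set.Iic z)).toReal

/-- Quantile function (inverse CDF) of the standard normal distribution. -/
noncomputable def stdNormalQuantile (p : ℝ) : ℝ :=
  Function.invFun stdNormalCDF p

/-!
Write `μ = N(0, σ²I)`, `ν` for its translate by `δ`, and `r = ‖δ‖`. The likelihood ratio `dν/dμ`
is an increasing function of `⟨δ, ε⟩`, so by the Neyman–Pearson lemma a half-space
`{⟨δ, ε⟩ ≤ a}` has the least `ν`-mass among the sets of its `μ`-mass. Since `⟨δ, ε⟩` is a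
one-dimensional Gaussian under both `μ` and `ν`, this gives `ν A ≥ Φ(q - r/σ)` whenever
`μ A ≥ Φ(q)`, and, applied to complements, `ν B ≤ Φ(q + r/σ)` whenever `μ B ≤ Φ(q)`.
For `r < σ/2 (Φ⁻¹ p_A - Φ⁻¹ p_B)` the first bound for `A = {f(x+·) = c_A}` strictly exceeds the
second for `B = {f(x+·) = c}`.
-/

open scoped NNReal ENNReal
open Set

lemma continuous_cdf {μ : Measure ℝ} [IsProbabilityMeasure μ] [NullSingletonClass μ] :
    Continuous (cdf μ) := by
  refine continuous_iff_continuousAt.2 fun x ↦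
    continuousAt_iff_continuous_left_right.2 ⟨?_, (cdf μ).right_continuous x⟩
  rw [← continuousWithinAt_Iio_iff_Iic, (monotone_cdf μ).continuousWithinAt_Iio_iff_leftLim_eq]
  have h := (cdf μ).measure_singleton x
  rw [measure_cdf, measure_singleton, eq_comm, ENNReal.ofReal_eq_zero, sub_nonpos] at h
  exact le_antisymm ((monotone_cdf μ).leftLim_le le_rfl) h

lemma strictMono_cdf {μ : Measure ℝ} [IsProbabilityMeasure μ] (hμ : volume ≪ μ) :
    StrictMono (cdf μ) := by
  intro a b hab
  have hpos : μ (Ioc a b) ≠ 0 := fun h0 ↦ by simpa [hab.not_ge] using hμ h0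
  rwa [← measure_cdf μ, (cdf μ).measure_Ioc, ne_eq, ENNReal.ofReal_eq_zero, not_le,
    sub_pos] at hpos

lemma stdNormalCDF_eq_cdf : stdNormalCDF = cdf (gaussianReal 0 1) := by
  ext z
  rw [cdf_eq_real, measureReal_def]
  rfl

instance : NullSingletonClass (gaussianReal 0 1) := nullSingletonClass_gaussianReal one_ne_zero

lemma continuous_stdNormalCDF : Continuous stdNormalCDF :=
  stdNormalCDF_eq_cdf ▸ continuous_cdf

lemma strictMono_stdNormalCDF : StrictMono stdNormalCDF :=
  stdNormalCDF_eq_cdf ▸ strictMono_cdf (gaussianReal_absolutelyContinuous' 0 one_ne_zero)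

lemma stdNormalCDF_stdNormalQuantile {p : ℝ} (hp : p ∈ Ioo 0 1) :
    stdNormalCDF (stdNormalQuantile p) = p := by
  refine Function.invFun_eq (mem_range_of_exists_le_of_exists_ge continuous_stdNormalCDF ?_ ?_)
  · rw [stdNormalCDF_eq_cdf]
    exact ((tendsto_cdf_atBot _).eventually (eventually_le_nhds hp.1)).exists
  · rw [stdNormalCDF_eq_cdf]
    exact ((tendsto_cdf_atTop _).eventually (eventually_ge_nhds hp.2)).exists

lemma stdNormalCDF_neg (z : ℝ) : stdNormalCDF (-z) = 1 - stdNormalCDF z := by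
  have hsymm : gaussianReal 0 1 (Iic (-z)) = gaussianReal 0 1 (Ici z) := by
    conv_lhs => rw [← neg_zero, ← gaussianReal_map_neg,
      Measure.map_apply measurable_neg measurableSet_Iic]
    congr 1
    ext
    simp
  rw [stdNormalCDF, hsymm, ← compl_Iio, prob_compl_eq_one_sub measurableSet_Iio,
    measure_congr Iio_ae_eq_Iic, ENNReal.toReal_sub_of_le prob_le_one ENNReal.one_ne_top]
  rfl

lemma gaussianReal_Iic_toReal (m a : ℝ) {v : ℝ≥0} (hv : v ≠ 0) :
    (gaussianReal m v (Iic a)).toReal = stdNormalCDF ((a - m) / √v) := by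
  have hs : 0 < √(v : ℝ) := by positivity
  have hmap : (gaussianReal 0 1).map (fun z ↦ √v * z + m) = gaussianReal m v := by
    rw [show (fun z ↦ √v * z + m) = (· + m) ∘ (√v * ·) from rfl,
      ← Measure.map_map (by fun_prop) (by fun_prop), gaussianReal_map_const_mul,
      gaussianReal_map_add_const, mul_zero, zero_add]
    congr
    ext
    simp
  have hpre : (fun z ↦ √v * z + m) ⁻¹' Iic a = Iic ((a - m) / √v) := by
    ext z
    simp only [mem_preimage, mem_Iic, le_div_iff₀ hs]
    constructor <;> intro h <;> linarith
  rw [← hmap, Measure.map_apply (by fun_prop) measurableSet_Iic, hpre]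
  rfl

/-- The Neyman–Pearson lemma for the likelihood ratio `L` with threshold `τ`. -/
lemma withDensity_apply_le_of_threshold {α : Type*} [MeasurableSpace α] {μ : Measure α}
    [IsFiniteMeasure μ] {L : α → ℝ≥0∞} (hL : Measurable L) {S T : Set α}
    (hS : MeasurableSet S) (hT : MeasurableSet T) {τ : ℝ≥0∞} (hST : μ S ≤ μ T)
    (hlow : ∀ y ∈ S \ T, L y ≤ τ) (hhigh : ∀ y ∈ T \ S, τ ≤ L y) :
    μ.withDensity L S ≤ μ.withDensity L T := by
  have hdiff : μ (S \ T) ≤ μ (T \ S) := by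
    rwa [← ENNReal.add_le_add_iff_right (measure_ne_top μ (S ∩ T)),
      measure_sdiff_add_inter _ hT, inter_comm, measure_sdiff_add_inter _ hS]
  have key : μ.withDensity L (S \ T) ≤ μ.withDensity L (T \ S) := calc
    μ.withDensity L (S \ T) = ∫⁻ y in S \ T, L y ∂μ := withDensity_apply _ (hS.diff hT)
    _ ≤ ∫⁻ _ in S \ T, τ ∂μ := setLIntegral_mono measurable_const hlow
    _ = τ * μ (S \ T) := setLIntegral_const _ _
    _ ≤ τ * μ (T \ S) := by gcongr
    _ = ∫⁻ _ in T \ S, τ ∂μ := (setLIntegral_const _ _).symm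
    _ ≤ ∫⁻ y in T \ S, L y ∂μ := setLIntegral_mono hL hhigh
    _ = μ.withDensity L (T \ S) := (withDensity_apply _ (hT.diff hS)).symm
  rw [← measure_sdiff_add_inter S hT, ← measure_sdiff_add_inter T hS, inter_comm T S]
  gcongr

lemma MeasureTheory.Measure.pi_withDensity {ι : Type*} [Fintype ι] {α : ι → Type*}
    [∀ i, MeasurableSpace (α i)] (μ : ∀ i, Measure (α i)) [∀ i, IsProbabilityMeasure (μ i)]
    {f : ∀ i, α i → ℝ≥0∞} (hf : ∀ i, Measurable (f i))
    [∀ i, SigmaFinite ((μ i).withDensity (f i))] :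
    Measure.pi (fun i ↦ (μ i).withDensity (f i))
      = (Measure.pi μ).withDensity (fun y ↦ ∏ i, f i (y i)) := by
  refine Measure.pi_eq fun s hs ↦ ?_
  have hind : (univ.pi s).indicator (fun y ↦ ∏ i, f i (y i))
      = fun y ↦ ∏ i, (s i).indicator (f i) (y i) := by
    ext y
    by_cases hy : y ∈ univ.pi s
    · simp_all [indicator_of_mem]
    · obtain ⟨i, hi⟩ : ∃ i, y i ∉ s i := by simpa using hy
      rw [indicator_of_notMem hy, Finset.prod_eq_zero (Finset.mem_univ i)
        (indicator_of_notMem hi _)]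
  rw [withDensity_apply _ (.univ_pi hs), ← lintegral_indicator (.univ_pi hs), hind,
    lintegral_prod_eq_prod_lintegral_of_indepFun _ _
      (iIndepFun_pi fun i ↦ ((hf i).indicator (hs i)).aemeasurable)
      fun i ↦ ((hf i).indicator (hs i)).comp (measurable_pi_apply i)]
  refine Finset.prod_congr rfl fun i _ ↦ ?_
  rw [(measurePreserving_eval μ i).lintegral_comp ((hf i).indicator (hs i)),
    lintegral_indicator (hs i), withDensity_apply _ (hs i)]

lemma gaussianReal_eq_withDensity (m : ℝ) {v : ℝ≥0} (hv : v ≠ 0) :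
    gaussianReal m v = (gaussianReal 0 v).withDensity
      (fun t ↦ ENNReal.ofReal (exp (m * t / v - m ^ 2 / (2 * v)))) := by
  rw [gaussianReal_of_var_ne_zero _ hv, gaussianReal_of_var_ne_zero _ hv,
    ← withDensity_mul _ (measurable_gaussianPDF 0 v) (by fun_prop)]
  congr 1
  ext t
  simp only [gaussianPDF, Pi.mul_apply, ← ENNReal.ofReal_mul (gaussianPDFReal_nonneg 0 v t)]
  rw [gaussianPDFReal, gaussianPDFReal, mul_assoc (√(2 * π * v))⁻¹, ← exp_add]
  congr 3
  field_simp
  ring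

section IsotropicGaussian

variable {ι : Type*} [Fintype ι] {v : ℝ≥0}

lemma sum_sq_pos_of_ne_zero {δ : ι → ℝ} (hδ : δ ≠ 0) : 0 < ∑ i, δ i ^ 2 := by
  obtain ⟨i, hi⟩ := Function.ne_iff.mp hδ
  exact Finset.sum_pos' (fun j _ ↦ sq_nonneg (δ j)) ⟨i, Finset.mem_univ i, sq_pos_of_ne_zero hi⟩

lemma pi_gaussianReal_eq_withDensity (m : ι → ℝ) (hv : v ≠ 0) :
    Measure.pi (fun i ↦ gaussianReal (m i) v)
      = (Measure.pi fun _ : ι ↦ gaussianReal 0 v).withDensity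
          (fun y ↦ ENNReal.ofReal (exp ((∑ i, m i * y i) / v - (∑ i, m i ^ 2) / (2 * v)))) := by
  have : ∀ i, SigmaFinite ((gaussianReal 0 v).withDensity
      (fun t ↦ ENNReal.ofReal (exp (m i * t / v - m i ^ 2 / (2 * v))))) := fun i ↦ by
    rw [← gaussianReal_eq_withDensity _ hv]
    infer_instance
  simp_rw [gaussianReal_eq_withDensity (m _) hv]
  rw [Measure.pi_withDensity _ fun i ↦ by fun_prop]
  congr 1
  ext y
  rw [← ENNReal.ofReal_prod_of_nonneg fun _ _ ↦ (exp_pos _).le, ← exp_sum, Finset.sum_div,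
    Finset.sum_div, Finset.sum_sub_distrib]

lemma pi_gaussianReal_map_add (m : ι → ℝ) (v : ℝ≥0) :
    (Measure.pi fun _ : ι ↦ gaussianReal 0 v).map (· + m)
      = Measure.pi fun i ↦ gaussianReal (m i) v := by
  have := Measure.pi_map_pi (μ := fun _ : ι ↦ gaussianReal 0 v) (f := fun i ↦ (· + m i))
    fun _ ↦ by fun_prop
  simp_rw [gaussianReal_map_add_const, zero_add] at this
  exact this

lemma pi_gaussianReal_map_sum (m : ι → ℝ) (v : ι → ℝ≥0) :
    (Measure.pi fun i ↦ gaussianReal (m i) (v i)).map (fun y ↦ ∑ i, y i)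
      = gaussianReal (∑ i, m i) (∑ i, v i) := by
  refine Measure.ext_of_charFun ?_
  ext t
  rw [charFun_map_sum_pi_eq_prod, Finset.prod_apply]
  simp only [charFun_gaussianReal, ← Complex.exp_sum]
  push_cast
  simp only [Finset.sum_sub_distrib, Finset.mul_sum, Finset.sum_mul, Finset.sum_div]

lemma pi_gaussianReal_map_sum_mul (m w : ι → ℝ) (v : ℝ≥0) :
    (Measure.pi fun i ↦ gaussianReal (m i) v).map (fun y ↦ ∑ i, w i * y i)
      = gaussianReal (∑ i, w i * m i) ((∑ i, w i ^ 2).toNNReal * v) := by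
  have hscale := Measure.pi_map_pi (μ := fun i ↦ gaussianReal (m i) v) (f := fun i ↦ (w i * ·))
    fun _ ↦ by fun_prop
  simp_rw [gaussianReal_map_const_mul] at hscale
  rw [show (fun y : ι → ℝ ↦ ∑ i, w i * y i) = (fun y ↦ ∑ i, y i) ∘ (fun y i ↦ w i * y i) from rfl,
    ← Measure.map_map (by fun_prop) (by fun_prop), hscale, pi_gaussianReal_map_sum,
    ← Finset.sum_mul, Real.toNNReal_sum_of_nonneg fun i _ ↦ sq_nonneg (w i)]
  congr with i
  simp [sq_nonneg]

lemma pi_gaussianReal_halfSpace_toReal (m : ι → ℝ) {δ : ι → ℝ} (hδ : δ ≠ 0) (hv : v ≠ 0)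
    (a : ℝ) :
    ((Measure.pi fun i ↦ gaussianReal (m i) v) {y | ∑ i, δ i * y i ≤ a}).toReal
      = stdNormalCDF ((a - ∑ i, δ i * m i) / (√(∑ i, δ i ^ 2) * √v)) := by
  have hpos := sum_sq_pos_of_ne_zero hδ
  have hvar : (∑ i, δ i ^ 2).toNNReal * v ≠ 0 := mul_ne_zero (by simpa using hpos) hv
  rw [show {y : ι → ℝ | ∑ i, δ i * y i ≤ a} = (fun y ↦ ∑ i, δ i * y i) ⁻¹' Iic a from rfl,
    ← Measure.map_apply (by fun_prop) measurableSet_Iic, pi_gaussianReal_map_sum_mul,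
    gaussianReal_Iic_toReal _ _ hvar, NNReal.coe_mul, Real.coe_toNNReal _ hpos.le,
    Real.sqrt_mul hpos.le]

lemma pi_gaussianReal_map_add_apply_eq_zero_iff (hv : v ≠ 0) (δ : ι → ℝ) (s : Set (ι → ℝ)) :
    (Measure.pi fun _ : ι ↦ gaussianReal 0 v).map (· + δ) s = 0
      ↔ (Measure.pi fun _ : ι ↦ gaussianReal 0 v) s = 0 := by
  rw [pi_gaussianReal_map_add, pi_gaussianReal_eq_withDensity _ hv]
  refine ⟨fun h ↦ withDensity_absolutelyContinuous' (by fun_prop : Measurable _).aemeasurable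
    ?_ h, fun h ↦ withDensity_absolutelyContinuous _ _ h⟩
  exact ae_of_all _ fun y ↦ by simp [exp_pos]

lemma pi_gaussianReal_map_add_lt_of_null (hv : v ≠ 0) (δ : ι → ℝ) {A B : Set (ι → ℝ)}
    (hB : (Measure.pi fun _ : ι ↦ gaussianReal 0 v) B = 0)
    (hA : (Measure.pi fun _ : ι ↦ gaussianReal 0 v) A ≠ 0) :
    (Measure.pi fun _ : ι ↦ gaussianReal 0 v).map (· + δ) B
      < (Measure.pi fun _ : ι ↦ gaussianReal 0 v).map (· + δ) A := by
  rwa [(pi_gaussianReal_map_add_apply_eq_zero_iff hv δ B).2 hB, pos_iff_ne_zero, ne_eq,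
    pi_gaussianReal_map_add_apply_eq_zero_iff hv δ]

lemma stdNormalCDF_sub_le_pi_gaussianReal_map_add (hv : v ≠ 0) (δ : ι → ℝ)
    {A : Set (ι → ℝ)} (hA : MeasurableSet A) {q : ℝ}
    (hq : stdNormalCDF q ≤ ((Measure.pi fun _ : ι ↦ gaussianReal 0 v) A).toReal) :
    stdNormalCDF (q - √(∑ i, δ i ^ 2) / √v)
      ≤ ((Measure.pi fun _ : ι ↦ gaussianReal 0 v).map (· + δ) A).toReal := by
  set μ := Measure.pi fun _ : ι ↦ gaussianReal 0 v
  rcases eq_or_ne δ 0 with rfl | hδ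
  · simpa using hq
  set r := √(∑ i, δ i ^ 2)
  have hr : 0 < r := Real.sqrt_pos.2 (sum_sq_pos_of_ne_zero hδ)
  have hs : 0 < r * √v := by positivity
  set H : Set (ι → ℝ) := {y | ∑ i, δ i * y i ≤ r * √v * q}
  have hH : MeasurableSet H := measurableSet_le (by fun_prop) (by fun_prop)
  have hμH : (μ H).toReal = stdNormalCDF q := by
    rw [pi_gaussianReal_halfSpace_toReal _ hδ hv]
    simp only [mul_zero, Finset.sum_const_zero, sub_zero]
    rw [mul_div_cancel_left₀ _ hs.ne']
  have hνH : (μ.map (· + δ) H).toReal = stdNormalCDF (q - r / √v) := by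
    have hr2 : ∑ i, δ i * δ i = r ^ 2 := by
      simp only [r, ← sq, Real.sq_sqrt (sum_sq_pos_of_ne_zero hδ).le]
    have harg : (r * √v * q - r ^ 2) / (r * √v) = q - r / √v := by
      field_simp
    rw [pi_gaussianReal_map_add, pi_gaussianReal_halfSpace_toReal _ hδ hv, hr2]
    exact congrArg stdNormalCDF harg
  set g : ℝ → ℝ≥0∞ := fun u ↦ ENNReal.ofReal (exp (u / v - (∑ i, δ i ^ 2) / (2 * v)))
  have hg : Monotone g := fun u u' h ↦
    ENNReal.ofReal_le_ofReal (exp_le_exp.2 (by gcongr))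
  have hνH_le : μ.map (· + δ) H ≤ μ.map (· + δ) A := by
    rw [pi_gaussianReal_map_add, pi_gaussianReal_eq_withDensity _ hv]
    refine withDensity_apply_le_of_threshold (by fun_prop) hH hA (τ := g (r * √v * q)) ?_
      (fun y hy ↦ hg hy.1) (fun y hy ↦ hg (le_of_not_ge hy.2))
    exact (ENNReal.toReal_le_toReal (measure_ne_top _ _) (measure_ne_top _ _)).1 (hμH ▸ hq)
  rw [← hνH]
  exact ENNReal.toReal_mono (measure_ne_top _ _) hνH_le

lemma pi_gaussianReal_map_add_le_stdNormalCDF_add (hv : v ≠ 0) (δ : ι → ℝ)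
    {B : Set (ι → ℝ)} (hB : MeasurableSet B) {q : ℝ}
    (hq : ((Measure.pi fun _ : ι ↦ gaussianReal 0 v) B).toReal ≤ stdNormalCDF q) :
    ((Measure.pi fun _ : ι ↦ gaussianReal 0 v).map (· + δ) B).toReal
      ≤ stdNormalCDF (q + √(∑ i, δ i ^ 2) / √v) := by
  have : IsProbabilityMeasure ((Measure.pi fun _ : ι ↦ gaussianReal 0 v).map (· + δ)) :=
    Measure.isProbabilityMeasure_map (by fun_prop)
  have hcompl := stdNormalCDF_sub_le_pi_gaussianReal_map_add hv δ hB.compl (q := -q) (by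
    rw [← measureReal_def, probReal_compl_eq_one_sub hB, measureReal_def, stdNormalCDF_neg]
    linarith)
  rw [← measureReal_def, probReal_compl_eq_one_sub hB, measureReal_def, ← neg_add',
    stdNormalCDF_neg] at hcompl
  linarith

lemma pi_gaussianReal_map_add_lt_of_radius (hv : v ≠ 0) (δ : ι → ℝ)
    {A B : Set (ι → ℝ)} (hA : MeasurableSet A) (hB : MeasurableSet B) {qA qB : ℝ}
    (hqA : stdNormalCDF qA ≤ ((Measure.pi fun _ : ι ↦ gaussianReal 0 v) A).toReal)
    (hqB : ((Measure.pi fun _ : ι ↦ gaussianReal 0 v) B).toReal ≤ stdNormalCDF qB)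
    (hδ : √(∑ i, δ i ^ 2) < √v / 2 * (qA - qB)) :
    (Measure.pi fun _ : ι ↦ gaussianReal 0 v).map (· + δ) B
      < (Measure.pi fun _ : ι ↦ gaussianReal 0 v).map (· + δ) A := by
  have hsv : 0 < √(v : ℝ) := by positivity
  have hgap : stdNormalCDF (qB + √(∑ i, δ i ^ 2) / √v)
      < stdNormalCDF (qA - √(∑ i, δ i ^ 2) / √v) := by
    refine strictMono_stdNormalCDF ?_
    have : √(∑ i, δ i ^ 2) / √v < (qA - qB) / 2 := by
      rw [div_lt_iff₀ hsv]
      linarith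
    linarith
  have hlow := stdNormalCDF_sub_le_pi_gaussianReal_map_add hv δ hA hqA
  have hup := pi_gaussianReal_map_add_le_stdNormalCDF_add hv δ hB hqB
  exact (ENNReal.toReal_lt_toReal (measure_ne_top _ _) (measure_ne_top _ _)).1 (by linarith)

end IsotropicGaussian

theorem certified_radius_randomized_smoothing_general
    {d : ℕ} {Y : Type*} [MeasurableSpace Y] [MeasurableSingletonClass Y]
    (f : (Fin d → ℝ) → Y) (hf : Measurable f) (σ : ℝ) (hσ : 0 < σ)
    (x : Fin d → ℝ) (cA : Y) (pA pB : ℝ)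
    (hpB : pB ∈ Set.Icc (0 : ℝ) 1) (hAB : pB ≤ pA)
    (μ : Measure (Fin d → ℝ))
    (hμ : μ = Measure.pi (fun _ : Fin d => gaussianReal 0 (Real.toNNReal (σ ^ 2))))
    (hA : pA ≤ (μ {ε | f (fun i => x i + ε i) = cA}).toReal)
    (hB : ∀ c, c ≠ cA → (μ {ε | f (fun i => x i + ε i) = c}).toReal ≤ pB) :
    ∀ δ : Fin d → ℝ,
      Real.sqrt (∑ i, δ i ^ 2) <
        σ / 2 * (stdNormalQuantile pA - stdNormalQuantile pB) →
      ∀ c, c ≠ cA →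
        μ {ε | f (fun i => x i + δ i + ε i) = c} <
          μ {ε | f (fun i => x i + δ i + ε i) = cA} := by
  intro δ hδ c hc
  have hV : (σ ^ 2).toNNReal ≠ 0 := by simpa using hσ.ne'
  have hσV : √((σ ^ 2).toNNReal : ℝ) = σ := by
    rw [Real.coe_toNNReal _ (sq_nonneg σ), Real.sqrt_sq hσ.le]
  have hmeas : ∀ c', MeasurableSet {ε : Fin d → ℝ | f (fun i ↦ x i + ε i) = c'} :=
    fun c' ↦ (hf.comp (by fun_prop)) (measurableSet_singleton c')
  have hshift : ∀ c', μ {ε | f (fun i ↦ x i + δ i + ε i) = c'}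
      = μ.map (· + δ) {ε | f (fun i ↦ x i + ε i) = c'} := fun c' ↦ by
    rw [Measure.map_apply (measurable_add_const δ) (hmeas c')]
    congr 1 with ε
    simp only [mem_preimage, mem_ofPred_eq, Pi.add_apply, add_assoc, add_comm (ε _)]
  rw [hshift, hshift]
  subst hμ
  set μ := Measure.pi fun _ : Fin d ↦ gaussianReal 0 (σ ^ 2).toNNReal
  set A := {ε : Fin d → ℝ | f (fun i ↦ x i + ε i) = cA}
  set B := {ε : Fin d → ℝ | f (fun i ↦ x i + ε i) = c}
  have hq : stdNormalQuantile pB < stdNormalQuantile pA := by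
    nlinarith [Real.sqrt_nonneg (∑ i, δ i ^ 2)]
  have hpA : 0 < pA := hpB.1.trans_lt (hAB.lt_of_ne fun h ↦ hq.ne (h ▸ rfl))
  -- `stdNormalQuantile` is junk outside `(0, 1)`; a null `B` covers `pB = 0` and `pA = 1`.
  by_cases hB0 : μ B = 0
  · refine pi_gaussianReal_map_add_lt_of_null hV δ hB0 fun hA0 ↦ ?_
    rw [hA0, ENNReal.toReal_zero] at hA
    linarith
  have hBpos : 0 < (μ B).toReal := ENNReal.toReal_pos hB0 (measure_ne_top _ _)
  have hpA1 : pA < 1 := by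
    have hBA : (μ B).toReal ≤ 1 - (μ A).toReal := by
      rw [← measureReal_def, ← measureReal_def, ← probReal_compl_eq_one_sub (hmeas cA)]
      exact measureReal_mono fun ε hε hεA ↦ hc (hε.symm.trans hεA)
    linarith
  have hpB0 : 0 < pB := hBpos.trans_le (hB c hc)
  refine pi_gaussianReal_map_add_lt_of_radius hV δ (hmeas cA) (hmeas c) ?_ ?_ (hσV ▸ hδ)
  · rwa [stdNormalCDF_stdNormalQuantile ⟨hpA, hpA1⟩]
  · rw [stdNormalCDF_stdNormalQuantile ⟨hpB0, hAB.trans_lt hpA1⟩]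
    exact hB c hc

theorem certified_radius_randomized_smoothing
    {d : ℕ} {Y : Type*} [MeasurableSpace Y] [MeasurableSingletonClass Y]
    (f : (Fin d → ℝ) → Y) (hf : Measurable f) (σ : ℝ) (hσ : 0 < σ)
    (x : Fin d → ℝ) (cA : Y) (pA pB : ℝ)
    (hpA : pA ∈ Set.Icc (0 : ℝ) 1) (hpB : pB ∈ Set.Icc (0 : ℝ) 1) (hAB : pB ≤ pA)
    (μ : Measure (Fin d → ℝ))
    (hμ : μ = Measure.pi (fun _ : Fin d => gaussianReal 0 (Real.toNNReal (σ ^ 2))))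
    (hA : pA ≤ (μ {ε | f (fun i => x i + ε i) = cA}).toReal)
    (hB : ∀ c, c ≠ cA → (μ {ε | f (fun i => x i + ε i) = c}).toReal ≤ pB) :
    ∀ δ : Fin d → ℝ,
      Real.sqrt (∑ i, δ i ^ 2) <
        σ / 2 * (stdNormalQuantile pA - stdNormalQuantile pB) →
      ∀ c, c ≠ cA →
        μ {ε | f (fun i => x i + δ i + ε i) = c} <
          μ {ε | f (fun i => x i + δ i + ε i) = cA} :=
  certified_radius_randomized_smoothing_general f hf σ hσ x cA pA pB hpB hAB μ hμ hA hB
end
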